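/- Let J ≥ 1, M > 0, δ ∈ ℝ^J, p ∈ ℝ^J with all p_j > 0, let σ_j(p, α) = exp(δ_j − α p_j) / (1 + Σ_{ℓ=1}^J exp(δ_ℓ − α p_ℓ)), let f be the log-normal density f(α) = (1/(α σ √(2π))) exp(−(log α − μ)²/(2σ²)) with μ ∈ ℝ, σ > 0, and define q_j(p) = M ∫₀^∞ σ_j(p, α) f(α) dα and L(x) = ∫₀^∞ e^{−αx} f(α) dα. Then for each j, q_j(λ p) / (M e^{δ_j} L(λ p_j)) → 1 as λ → ∞. -/

import Mathlib

/-!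
Pointwise, `e^{δ_j - α p_j} (1 - Σ_k e^{δ_k - α p_k}) ≤ σ_j(p, α) ≤ e^{δ_j - α p_j}`; integrating against `f`,
`e^{δ_j} L(λ p_j) - Σ_k e^{δ_j + δ_k} L(λ (p_j + p_k)) ≤ q_j(λ p) / M ≤ e^{δ_j} L(λ p_j)`,
so everything reduces to `L(b x) / L(a x) → 0` for `0 ≤ a < b`.

Splitting the Laplace integral at `t` gives `L(b x) ≤ P(α ≤ t) + e^{-(b - a) t x} L(a x)`, and
`L(a x) ≥ e^{-4 t a x} P(2t < α ≤ 4t)`. Below the mode `e^{μ - σ²}` the density increases, so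
`P(α ≤ t) ≤ t f(t)` and `P(2t < α ≤ 4t) ≥ 2t f(2t)`, and the thin left tail of the log-normal law makes
`f(t) / f(2t)` a constant multiple of `t^{log 2 / σ²}`.
With `t = √(log x) / x`, both `t x → ∞` and `e^{4 t a x} f(t) / f(2t) → 0`.
-/

open MeasureTheory Real Filter

/-- Density of the log-normal distribution with parameters `μ` and `σ` on `(0, ∞)`. -/
noncomputable def lognormalPdf (μ σ : ℝ) (α : ℝ) : ℝ :=
  (1 / (α * σ * Real.sqrt (2 * Real.pi))) * Real.exp (-(Real.log α - μ) ^ 2 / (2 * σ ^ 2))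

/-- Laplace transform of the log-normal distribution. -/
noncomputable def lnLaplace (μ σ : ℝ) (x : ℝ) : ℝ :=
  ∫ α in Set.Ioi (0 : ℝ), Real.exp (-α * x) * lognormalPdf μ σ α

/-- Logit choice probability of product `j` at prices `p`, mean utilities `δ`,
and price coefficient `α`. -/
noncomputable def logitShare {J : ℕ} (δ : Fin J → ℝ) (j : Fin J) (p : Fin J → ℝ) (α : ℝ) : ℝ :=
  Real.exp (δ j - α * p j) / (1 + ∑ l, Real.exp (δ l - α * p l))

/-- Mixed-logit demand for product `j` with log-normal mixing over the price coefficient. -/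
noncomputable def qLN {J : ℕ} (δ : Fin J → ℝ) (M μ σ : ℝ) (j : Fin J) (p : Fin J → ℝ) : ℝ :=
  M * ∫ α in Set.Ioi (0 : ℝ), logitShare δ j p α * lognormalPdf μ σ α

/-- Partial derivative of `F : (Fin J → ℝ) → ℝ` in the `k`-th coordinate at `p`. -/
noncomputable def pd {J : ℕ} (F : (Fin J → ℝ) → ℝ) (k : Fin J) (p : Fin J → ℝ) : ℝ :=
  deriv (fun t => F (Function.update p k t)) (p k)

open Set ProbabilityTheory

variable {μ σ a b r s t v x y z α : ℝ}

lemma lognormalPdf_of_pos (hα : 0 < α) :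
    lognormalPdf μ σ α =
      (σ * √(2 * π))⁻¹ * exp (-log α - (log α - μ) ^ 2 / (2 * σ ^ 2)) := by
  rw [lognormalPdf, sub_eq_add_neg (-log α), exp_add, exp_neg, exp_log hα, ← neg_div]
  field_simp

lemma lognormalPdf_pos (hσ : 0 < σ) (hα : 0 < α) : 0 < lognormalPdf μ σ α := by
  unfold lognormalPdf
  positivity

lemma mul_lognormalPdf (hσ : 0 < σ) (ht : 0 < t) :
    t * lognormalPdf μ σ t = gaussianPDFReal μ (σ ^ 2).toNNReal (log t) := by
  rw [gaussianPDFReal, Real.coe_toNNReal _ (sq_nonneg σ), lognormalPdf,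
    show 2 * π * σ ^ 2 = σ ^ 2 * (2 * π) by ring, Real.sqrt_mul' (σ ^ 2) (by positivity),
    Real.sqrt_sq hσ.le]
  field_simp

/-- The log-normal law is the image of `𝓝(μ, σ²)` under `exp`. -/
lemma integrableOn_lognormalPdf (hσ : 0 < σ) : IntegrableOn (lognormalPdf μ σ) (Ioi 0) := by
  rw [← Real.range_exp, ← image_univ, integrableOn_image_iff_integrableOn_abs_deriv_smul
    MeasurableSet.univ (fun u _ => (Real.hasDerivAt_exp u).hasDerivWithinAt)
    Real.exp_injective.injOn]
  simp_rw [abs_of_pos (exp_pos _), smul_eq_mul, mul_lognormalPdf hσ (exp_pos _), log_exp]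
  exact (integrable_gaussianPDFReal _ _).integrableOn

lemma monotoneOn_lognormalPdf (hσ : 0 < σ) :
    MonotoneOn (lognormalPdf μ σ) (Ioc 0 (exp (μ - σ ^ 2))) := by
  rintro s ⟨hs, -⟩ t ⟨ht, htm⟩ hst
  -- in `log α` the exponent is a concave quadratic with vertex at `μ - σ ^ 2`
  rw [lognormalPdf_of_pos hs, lognormalPdf_of_pos ht]
  gcongr ?_ * exp ?_
  have hlog : log s ≤ log t := log_le_log hs hst
  have hlogm : log t ≤ μ - σ ^ 2 := by simpa using log_le_log ht htm
  have key : log t - log s ≤ ((log s - μ) ^ 2 - (log t - μ) ^ 2) / (2 * σ ^ 2) := by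
    rw [le_div_iff₀ (by positivity)]
    nlinarith
  rw [sub_div] at key
  linarith

lemma lognormalPdf_div_lognormalPdf_two_mul (hσ : 0 < σ) (ht : 0 < t) :
    lognormalPdf μ σ t / (2 * lognormalPdf μ σ (2 * t)) =
      exp (log 2 * (2 * (log t - μ) + log 2) / (2 * σ ^ 2)) := by
  have hexp : -log t - (log t - μ) ^ 2 / (2 * σ ^ 2) =
      log 2 + (-log (2 * t) - (log (2 * t) - μ) ^ 2 / (2 * σ ^ 2)) +
        log 2 * (2 * (log t - μ) + log 2) / (2 * σ ^ 2) := by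
    rw [log_mul two_ne_zero ht.ne']
    field_simp
    ring
  rw [lognormalPdf_of_pos ht, lognormalPdf_of_pos (by positivity), hexp, exp_add, exp_add,
    exp_log two_pos]
  field_simp

lemma setIntegral_Ioc_zero_lognormalPdf_le (hσ : 0 < σ) (ht : 0 < t)
    (htm : t ≤ exp (μ - σ ^ 2)) :
    ∫ α in Ioc 0 t, lognormalPdf μ σ α ≤ t * lognormalPdf μ σ t := by
  calc ∫ α in Ioc 0 t, lognormalPdf μ σ α ≤ ∫ _ in Ioc 0 t, lognormalPdf μ σ t :=
        setIntegral_mono_on ((integrableOn_lognormalPdf hσ).mono_set Ioc_subset_Ioi_self)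
          (integrableOn_const (by simp)) measurableSet_Ioc fun α hα =>
          monotoneOn_lognormalPdf hσ ⟨hα.1, hα.2.trans htm⟩ ⟨ht, htm⟩ hα.2
    _ = t * lognormalPdf μ σ t := by simp [ht.le]

lemma mul_lognormalPdf_le_setIntegral_Ioc (hσ : 0 < σ) (ht : 0 < t)
    (htm : 2 * t ≤ exp (μ - σ ^ 2)) :
    t * lognormalPdf μ σ t ≤ ∫ α in Ioc t (2 * t), lognormalPdf μ σ α := by
  calc t * lognormalPdf μ σ t = ∫ _ in Ioc t (2 * t), lognormalPdf μ σ t := by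
        simp [ht.le, two_mul]
    _ ≤ ∫ α in Ioc t (2 * t), lognormalPdf μ σ α :=
        setIntegral_mono_on (integrableOn_const (by simp))
          ((integrableOn_lognormalPdf hσ).mono_set fun α hα => ht.trans hα.1) measurableSet_Ioc
          fun α hα => monotoneOn_lognormalPdf hσ ⟨ht, by linarith⟩
            ⟨ht.trans hα.1, hα.2.trans htm⟩ hα.1.le

lemma integrableOn_exp_mul_lognormalPdf (hσ : 0 < σ) (hx : 0 ≤ x) :
    IntegrableOn (fun α => exp (-α * x) * lognormalPdf μ σ α) (Ioi 0) := by
  refine (integrableOn_lognormalPdf hσ).bdd_mul (c := 1) (by fun_prop) ?_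
  filter_upwards [ae_restrict_mem measurableSet_Ioi] with α hα
  rw [norm_of_nonneg (exp_nonneg _), exp_le_one_iff]
  nlinarith [mem_Ioi.1 hα]

lemma lnLaplace_pos (hσ : 0 < σ) (hx : 0 ≤ x) : 0 < lnLaplace μ σ x := by
  rw [lnLaplace, setIntegral_pos_iff_support_of_nonneg_ae ?_
    (integrableOn_exp_mul_lognormalPdf hσ hx)]
  · have hsupp : Function.support (fun α => exp (-α * x) * lognormalPdf μ σ α) ∩ Ioi 0 =
        Ioi 0 := inter_eq_right.2 fun α hα => (mul_pos (exp_pos _) (lognormalPdf_pos hσ hα)).ne'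
    rw [hsupp]
    simp
  · filter_upwards [ae_restrict_mem measurableSet_Ioi] with α hα
    exact (mul_pos (exp_pos _) (lognormalPdf_pos hσ hα)).le

lemma lnLaplace_add_le (hσ : 0 < σ) (hy : 0 ≤ y) (hz : 0 ≤ z) (ht : 0 < t) :
    lnLaplace μ σ (y + z) ≤
      (∫ α in Ioc 0 t, lognormalPdf μ σ α) + exp (-(t * z)) * lnLaplace μ σ y := by
  have hint := integrableOn_exp_mul_lognormalPdf (μ := μ) hσ (add_nonneg hy hz)
  have hint_y := integrableOn_exp_mul_lognormalPdf (μ := μ) hσ hy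
  rw [lnLaplace, ← Ioc_union_Ioi_eq_Ioi ht.le, setIntegral_union (Ioc_disjoint_Ioi le_rfl)
    measurableSet_Ioi (hint.mono_set Ioc_subset_Ioi_self) (hint.mono_set (Ioi_subset_Ioi ht.le))]
  gcongr ?_ + ?_
  · refine setIntegral_mono_on (hint.mono_set Ioc_subset_Ioi_self)
      ((integrableOn_lognormalPdf hσ).mono_set Ioc_subset_Ioi_self) measurableSet_Ioc
      fun α hα => mul_le_of_le_one_left (lognormalPdf_pos hσ hα.1).le ?_
    rw [exp_le_one_iff]
    nlinarith [hα.1]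
  · calc ∫ α in Ioi t, exp (-α * (y + z)) * lognormalPdf μ σ α
        ≤ ∫ α in Ioi t, exp (-(t * z)) * (exp (-α * y) * lognormalPdf μ σ α) := by
          refine setIntegral_mono_on (hint.mono_set (Ioi_subset_Ioi ht.le))
            ((hint_y.mono_set (Ioi_subset_Ioi ht.le)).const_mul _) measurableSet_Ioi
            fun α hα => ?_
          rw [← mul_assoc, ← exp_add]
          refine mul_le_mul_of_nonneg_right (exp_le_exp.2 ?_)
            (lognormalPdf_pos hσ (ht.trans hα)).le
          nlinarith [mem_Ioi.1 hα]
      _ ≤ exp (-(t * z)) * lnLaplace μ σ y := by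
          rw [integral_const_mul]
          gcongr
          refine setIntegral_mono_set hint_y ?_ (Ioi_subset_Ioi ht.le).eventuallyLE
          filter_upwards [ae_restrict_mem measurableSet_Ioi] with α hα
          exact (mul_pos (exp_pos _) (lognormalPdf_pos hσ hα)).le

lemma exp_mul_setIntegral_Ioc_le_lnLaplace (hσ : 0 < σ) (hy : 0 ≤ y) (hr : 0 ≤ r) :
    exp (-(s * y)) * ∫ α in Ioc r s, lognormalPdf μ σ α ≤ lnLaplace μ σ y := by
  have hsub : Ioc r s ⊆ Ioi 0 := fun α hα => hr.trans_lt hα.1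
  have hint := integrableOn_exp_mul_lognormalPdf (μ := μ) hσ hy
  rw [← integral_const_mul]
  calc ∫ α in Ioc r s, exp (-(s * y)) * lognormalPdf μ σ α
      ≤ ∫ α in Ioc r s, exp (-α * y) * lognormalPdf μ σ α :=
        setIntegral_mono_on (((integrableOn_lognormalPdf hσ).mono_set hsub).const_mul _)
          (hint.mono_set hsub) measurableSet_Ioc fun α hα =>
          mul_le_mul_of_nonneg_right (exp_le_exp.2 (by nlinarith [hα.2]))
            (lognormalPdf_pos hσ (hsub hα)).le
    _ ≤ lnLaplace μ σ y := by
        refine setIntegral_mono_set hint ?_ hsub.eventuallyLE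
        filter_upwards [ae_restrict_mem measurableSet_Ioi] with α hα
        exact (mul_pos (exp_pos _) (lognormalPdf_pos hσ hα)).le

lemma lnLaplace_add_div_le (hσ : 0 < σ) (hy : 0 ≤ y) (hz : 0 ≤ z) (ht : 0 < t)
    (htm : 4 * t ≤ exp (μ - σ ^ 2)) :
    lnLaplace μ σ (y + z) / lnLaplace μ σ y ≤
      exp (4 * t * y + log 2 * (2 * (log t - μ) + log 2) / (2 * σ ^ 2)) + exp (-(t * z)) := by
  set E := log 2 * (2 * (log t - μ) + log 2) / (2 * σ ^ 2)
  have hmass : exp (-(4 * t * y)) * (2 * t * lognormalPdf μ σ (2 * t)) ≤ lnLaplace μ σ y := by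
    calc exp (-(4 * t * y)) * (2 * t * lognormalPdf μ σ (2 * t))
        ≤ exp (-(2 * (2 * t) * y)) * ∫ α in Ioc (2 * t) (2 * (2 * t)), lognormalPdf μ σ α := by
          rw [show 2 * (2 * t) * y = 4 * t * y by ring]
          gcongr
          exact mul_lognormalPdf_le_setIntegral_Ioc hσ (by positivity) (by linarith)
      _ ≤ lnLaplace μ σ y := exp_mul_setIntegral_Ioc_le_lnLaplace hσ hy (by positivity)
  have hhead : t * lognormalPdf μ σ t ≤ exp (4 * t * y + E) * lnLaplace μ σ y := by
    have h2t := lognormalPdf_pos (μ := μ) hσ (by positivity : 0 < 2 * t)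
    calc t * lognormalPdf μ σ t = exp E * (2 * t * lognormalPdf μ σ (2 * t)) := by
          rw [← lognormalPdf_div_lognormalPdf_two_mul hσ ht, div_mul_eq_mul_div,
            eq_div_iff (by positivity)]
          ring
      _ = exp (4 * t * y + E) * (exp (-(4 * t * y)) * (2 * t * lognormalPdf μ σ (2 * t))) := by
          rw [exp_add, exp_neg]
          field_simp
      _ ≤ exp (4 * t * y + E) * lnLaplace μ σ y := by gcongr
  rw [div_le_iff₀ (lnLaplace_pos hσ hy), add_mul]
  calc lnLaplace μ σ (y + z)
      ≤ (∫ α in Ioc 0 t, lognormalPdf μ σ α) + exp (-(t * z)) * lnLaplace μ σ y :=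
        lnLaplace_add_le hσ hy hz ht
    _ ≤ exp (4 * t * y + E) * lnLaplace μ σ y + exp (-(t * z)) * lnLaplace μ σ y := by
        gcongr
        exact (setIntegral_Ioc_zero_lognormalPdf_le hσ ht (by linarith)).trans hhead

lemma lnLaplace_exp_mul_div_le (hσ : 0 < σ) (ha : 0 ≤ a) (hab : a ≤ b) (hv : 1 ≤ v)
    (hvm : v * exp (-v) ≤ exp (μ - σ ^ 2) / 4) :
    lnLaplace μ σ (exp v * b) / lnLaplace μ σ (exp v * a) ≤
      exp (4 * a * √v + log 2 * (2 * (√v - √v ^ 2 - μ) + log 2) / (2 * σ ^ 2)) +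
        exp (-((b - a) * √v)) := by
  set t := √v / exp v
  have ht : 0 < t := by positivity
  have htm : 4 * t ≤ exp (μ - σ ^ 2) := by
    calc 4 * t ≤ 4 * (v * exp (-v)) := by
          rw [exp_neg, ← div_eq_mul_inv]
          gcongr
          exact div_le_div_of_nonneg_right (Real.sqrt_le_self_iff.2 (Or.inr hv)) (exp_pos v).le
      _ ≤ exp (μ - σ ^ 2) := by linarith
  have hlog : log t ≤ √v - √v ^ 2 := by
    rw [log_div (by positivity) (exp_pos v).ne', log_exp, Real.sq_sqrt (by linarith)]
    linarith [log_le_sub_one_of_pos (Real.sqrt_pos.2 (by linarith : 0 < v))]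
  have hty : 4 * t * (exp v * a) = 4 * a * √v := by
    simp only [t]
    field_simp
  have htz : t * (exp v * (b - a)) = (b - a) * √v := by
    simp only [t]
    field_simp
  have key := lnLaplace_add_div_le (μ := μ) hσ (mul_nonneg (exp_pos v).le ha)
    (mul_nonneg (exp_pos v).le (sub_nonneg.2 hab)) ht htm
  rw [← mul_add, add_sub_cancel, hty, htz] at key
  refine key.trans ?_
  gcongr

lemma tendsto_lnLaplace_mul_div (hσ : 0 < σ) (ha : 0 ≤ a) (hab : a < b) :
    Tendsto (fun x => lnLaplace μ σ (x * b) / lnLaplace μ σ (x * a)) atTop (nhds 0) := by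
  set c := log 2 / (2 * σ ^ 2)
  have hc : 0 < c := div_pos (log_pos one_lt_two) (by positivity)
  have hquad : Tendsto (fun s => (-(2 * c) * s + (4 * a + 2 * c)) * s + c * (log 2 - 2 * μ))
      atTop atBot :=
    tendsto_atBot_add_const_right _ _ <| (tendsto_atBot_add_const_right _ _
      (tendsto_id.const_mul_atTop_of_neg (by linarith))).atBot_mul_atTop₀ tendsto_id
  have hlinear : Tendsto (fun s => -((b - a) * s)) atTop atBot :=
    tendsto_neg_atTop_atBot.comp (tendsto_id.const_mul_atTop (sub_pos.2 hab))
  have hbound : Tendsto (fun s => exp (4 * a * s + log 2 * (2 * (s - s ^ 2 - μ) + log 2) /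
      (2 * σ ^ 2)) + exp (-((b - a) * s))) atTop (nhds 0) := by
    have h := (tendsto_exp_atBot.comp hquad).add (tendsto_exp_atBot.comp hlinear)
    rw [add_zero] at h
    refine h.congr fun s => ?_
    simp only [Function.comp, c]
    ring_nf
  have hmode : ∀ᶠ v in atTop, v * exp (-v) ≤ exp (μ - σ ^ 2) / 4 := by
    simpa using (tendsto_pow_mul_exp_neg_atTop_nhds_zero 1).eventually
      (ge_mem_nhds (by positivity : (0 : ℝ) < exp (μ - σ ^ 2) / 4))
  rw [← Real.tendsto_comp_exp_atTop]
  refine squeeze_zero' (Eventually.of_forall fun v => ?_) ?_ (hbound.comp tendsto_sqrt_atTop)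
  · exact div_nonneg (lnLaplace_pos hσ (mul_nonneg (exp_pos v).le (ha.trans hab.le))).le
      (lnLaplace_pos hσ (mul_nonneg (exp_pos v).le ha)).le
  filter_upwards [eventually_ge_atTop 1, hmode] with v hv hvm
  exact lnLaplace_exp_mul_div_le hσ ha hab.le hv hvm

lemma mul_one_sub_le_div_one_add {x S : ℝ} (hx : 0 ≤ x) (hS : 0 ≤ S) :
    x * (1 - S) ≤ x / (1 + S) := by
  rw [le_div_iff₀ (by linarith)]
  nlinarith [mul_nonneg hx (sq_nonneg S)]

section logitShare

variable {J : ℕ} (δ : Fin J → ℝ) (j : Fin J) (p : Fin J → ℝ)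

lemma sum_exp_nonneg (α : ℝ) : 0 ≤ ∑ k, exp (δ k - α * p k) :=
  Finset.sum_nonneg fun _ _ => (exp_pos _).le

lemma logitShare_nonneg (α : ℝ) : 0 ≤ logitShare δ j p α :=
  div_nonneg (exp_nonneg _) (by linarith [sum_exp_nonneg δ p α])

lemma logitShare_le (α : ℝ) : logitShare δ j p α ≤ exp (δ j - α * p j) :=
  div_le_self (exp_nonneg _) (by linarith [sum_exp_nonneg δ p α])

lemma logitShare_le_one (α : ℝ) : logitShare δ j p α ≤ 1 :=
  div_le_one_of_le₀ ((Finset.single_le_sum (fun k _ => (exp_pos (δ k - α * p k)).le)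
    (Finset.mem_univ j)).trans (le_add_of_nonneg_left zero_le_one))
    (by linarith [sum_exp_nonneg δ p α])

lemma exp_mul_one_sub_sum_le_logitShare (α : ℝ) :
    exp (δ j - α * p j) * (1 - ∑ k, exp (δ k - α * p k)) ≤ logitShare δ j p α :=
  mul_one_sub_le_div_one_add (exp_nonneg _) (sum_exp_nonneg δ p α)

lemma integrableOn_logitShare_mul_lognormalPdf (hσ : 0 < σ) :
    IntegrableOn (fun α => logitShare δ j p α * lognormalPdf μ σ α) (Ioi 0) :=
  (integrableOn_lognormalPdf hσ).bdd_mul (c := 1)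
    (Measurable.aestronglyMeasurable (by unfold logitShare; fun_prop))
    (Eventually.of_forall fun α => by
      rw [norm_of_nonneg (logitShare_nonneg δ j p α)]
      exact logitShare_le_one δ j p α)

lemma integral_logitShare_mul_lognormalPdf_le (hσ : 0 < σ) (hpj : 0 ≤ p j) :
    ∫ α in Ioi 0, logitShare δ j p α * lognormalPdf μ σ α ≤
      exp (δ j) * lnLaplace μ σ (p j) := by
  rw [lnLaplace, ← integral_const_mul]
  refine setIntegral_mono_on (integrableOn_logitShare_mul_lognormalPdf δ j p hσ)
    ((integrableOn_exp_mul_lognormalPdf hσ hpj).const_mul _) measurableSet_Ioi fun α hα => ?_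
  rw [← mul_assoc, ← exp_add, neg_mul, ← sub_eq_add_neg]
  exact mul_le_mul_of_nonneg_right (logitShare_le δ j p α) (lognormalPdf_pos hσ hα).le

lemma sub_sum_le_integral_logitShare_mul_lognormalPdf (hσ : 0 < σ) (hp : ∀ k, 0 ≤ p k) :
    exp (δ j) * lnLaplace μ σ (p j) - ∑ k, exp (δ j + δ k) * lnLaplace μ σ (p j + p k) ≤
      ∫ α in Ioi 0, logitShare δ j p α * lognormalPdf μ σ α := by
  have hint (x : ℝ) (hx : 0 ≤ x) (C : ℝ) :
      IntegrableOn (fun α => C * (exp (-α * x) * lognormalPdf μ σ α)) (Ioi 0) :=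
    (integrableOn_exp_mul_lognormalPdf hσ hx).const_mul C
  have hsum := integrable_finsetSum Finset.univ fun k _ =>
    hint _ (add_nonneg (hp j) (hp k)) (exp (δ j + δ k))
  calc exp (δ j) * lnLaplace μ σ (p j) - ∑ k, exp (δ j + δ k) * lnLaplace μ σ (p j + p k)
      = ∫ α in Ioi 0, (exp (δ j) * (exp (-α * p j) * lognormalPdf μ σ α) -
          ∑ k, exp (δ j + δ k) * (exp (-α * (p j + p k)) * lognormalPdf μ σ α)) := by
        rw [integral_sub (hint _ (hp j) _) hsum,
          integral_finsetSum _ fun k _ => hint _ (add_nonneg (hp j) (hp k)) _]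
        simp only [integral_const_mul, lnLaplace]
    _ ≤ ∫ α in Ioi 0, logitShare δ j p α * lognormalPdf μ σ α := by
        refine setIntegral_mono_on ((hint _ (hp j) _).sub hsum)
          (integrableOn_logitShare_mul_lognormalPdf δ j p hσ) measurableSet_Ioi fun α hα => ?_
        refine le_of_eq_of_le ?_ (mul_le_mul_of_nonneg_right
          (exp_mul_one_sub_sum_le_logitShare δ j p α) (lognormalPdf_pos hσ hα).le)
        simp only [mul_sub, sub_mul, mul_one, Finset.mul_sum, Finset.sum_mul]
        congr 1
        · rw [← mul_assoc, ← exp_add]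
          ring_nf
        · refine Finset.sum_congr rfl fun k _ => ?_
          rw [← mul_assoc, ← exp_add, ← exp_add]
          ring_nf

end logitShare

theorem qLN_ray_asymptotics_general {J : ℕ} (M : ℝ) (hM : 0 < M) (δ : Fin J → ℝ)
    (μ σ : ℝ) (hσ : 0 < σ) (p : Fin J → ℝ) (hp : ∀ i, 0 < p i) (j : Fin J) :
    Tendsto (fun l : ℝ =>
        qLN δ M μ σ j (l • p) / (M * Real.exp (δ j) * lnLaplace μ σ (l * p j)))
      atTop (nhds 1) := by
  have hsum : Tendsto (fun l => ∑ k, exp (δ k) *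
      (lnLaplace μ σ (l * (p j + p k)) / lnLaplace μ σ (l * p j))) atTop (nhds 0) := by
    simpa using tendsto_finsetSum Finset.univ fun k _ =>
      (tendsto_lnLaplace_mul_div hσ (hp j).le (lt_add_of_pos_right _ (hp k))).const_mul
        (exp (δ k))
  have hbounds : ∀ᶠ l in atTop,
      1 - ∑ k, exp (δ k) * (lnLaplace μ σ (l * (p j + p k)) / lnLaplace μ σ (l * p j)) ≤
        qLN δ M μ σ j (l • p) / (M * exp (δ j) * lnLaplace μ σ (l * p j)) ∧
      qLN δ M μ σ j (l • p) / (M * exp (δ j) * lnLaplace μ σ (l * p j)) ≤ 1 := by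
    filter_upwards [eventually_gt_atTop 0] with l hl
    have hlp (k : Fin J) : 0 ≤ (l • p) k := mul_nonneg hl.le (hp k).le
    have hLj : 0 < lnLaplace μ σ (l * p j) := lnLaplace_pos hσ (hlp j)
    have hL : 0 < exp (δ j) * lnLaplace μ σ (l * p j) := mul_pos (exp_pos _) hLj
    rw [qLN, mul_assoc M, mul_div_mul_left _ _ hM.ne', le_div_iff₀ hL, div_le_one hL]
    refine ⟨?_, integral_logitShare_mul_lognormalPdf_le δ j (l • p) hσ (hlp j)⟩
    refine le_of_eq_of_le ?_ (sub_sum_le_integral_logitShare_mul_lognormalPdf δ j (l • p) hσ hlp)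
    simp only [Pi.smul_apply, smul_eq_mul, ← mul_add, sub_mul, one_mul, Finset.sum_mul, exp_add]
    congr 1
    refine Finset.sum_congr rfl fun k _ => ?_
    field_simp [hLj.ne']
  exact tendsto_of_tendsto_of_tendsto_of_le_of_le' (by simpa using tendsto_const_nhds.sub hsum)
    tendsto_const_nhds (hbounds.mono fun _ h => h.1) (hbounds.mono fun _ h => h.2)

/-- Along any ray `p ∈ ℝ_{++}^J`, `q_j(λp) / (M e^{δ_j} L(λ p_j)) → 1` as `λ → ∞`. -/
theorem qLN_ray_asymptotics {J : ℕ} (hJ : 1 ≤ J) (M : ℝ) (hM : 0 < M) (δ : Fin J → ℝ)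
    (μ σ : ℝ) (hσ : 0 < σ) (p : Fin J → ℝ) (hp : ∀ i, 0 < p i) (j : Fin J) :
    Tendsto (fun l : ℝ =>
        qLN δ M μ σ j (l • p) / (M * Real.exp (δ j) * lnLaplace μ σ (l * p j)))
      atTop (nhds 1) :=
  qLN_ray_asymptotics_general M hM δ μ σ hσ p hp j
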